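/- Let α be a positive root in a reduced root system R, and μ a Weyl group element such that μ⁻¹α is simple. Then the two sets {β ∈ R : β>0, s_α(β)<0, μ⁻¹β<0} and {β ∈ R : β>0, s_α(β)<0, μ⁻¹β>0, β≠α} are disjoint, their union is R⁺_α \ {α} where R⁺_α = {β>0 : s_α(β)<0}, and the map β ↦ −s_α(β) is an involution of R⁺_α \ {α} interchanging these two sets. -/

import Mathlib

/-! Conjugation by `μ⁻¹` turns `s_α` into the reflection `s_γ` in the simple root `γ = μ⁻¹α`,
and `s_γ` permutes the positive roots other than `γ`. Hence for `β ∈ R⁺_α \ {α}` the roots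
`μ⁻¹β` and `μ⁻¹(-s_α β) = -s_γ(μ⁻¹β)` have opposite signs. -/

open scoped InnerProductSpace

variable {V : Type*} [NormedAddCommGroup V] [InnerProductSpace ℝ V]

/-- The (orthogonal) reflection in the root `α`: `s_α(v) = v - (2⟪v,α⟫/⟪α,α⟫)α`. -/
noncomputable def sRefl (α v : V) : V := v - (2 * ⟪v, α⟫_ℝ / ⟪α, α⟫_ℝ) • α

/-- The coroot of `α`, identified with a vector via the invariant inner product. -/
noncomputable def coroot (α : V) : V := (2 / ⟪α, α⟫_ℝ) • α

/-- `S_A`: the product of the (commuting) reflections in the pairwise orthogonal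
elements of `A`, given by its closed formula. -/
noncomputable def SRefl (A : Finset V) (v : V) : V :=
  v - ∑ α ∈ A, (2 * ⟪v, α⟫_ℝ / ⟪α, α⟫_ℝ) • α

/-- A (reduced) root system in `V`, with the ambient inner product Weyl-invariant. -/
structure IsRootSystem (R : Set V) : Prop where
  finite : R.Finite
  nonempty : R.Nonempty
  ne_zero : ∀ α ∈ R, α ≠ (0 : V)
  refl_mem : ∀ α ∈ R, ∀ β ∈ R, sRefl α β ∈ R
  integral : ∀ α ∈ R, ∀ β ∈ R, ∃ n : ℤ, 2 * ⟪β, α⟫_ℝ / ⟪α, α⟫_ℝ = (n : ℝ)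
  reduced : ∀ α ∈ R, ∀ t : ℝ, t • α ∈ R → t = 1 ∨ t = -1

/-- `α` and `β` are strongly orthogonal: neither their sum nor difference is a root. -/
def StronglyOrthogonal (R : Set V) (α β : V) : Prop := α + β ∉ R ∧ α - β ∉ R

/-- A strongly orthogonal subset of `R`. -/
def IsSOS (R A : Set V) : Prop := A ⊆ R ∧ A.Pairwise (StronglyOrthogonal R)

/-- A choice of positive roots in `R`. -/
structure IsPositiveSystem (R P : Set V) : Prop where
  subset : P ⊆ R
  mem_or_neg_mem : ∀ α ∈ R, α ∈ P ∨ -α ∈ P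
  not_both : ∀ α ∈ P, -α ∉ P
  add_mem : ∀ α ∈ P, ∀ β ∈ P, α + β ∈ R → α + β ∈ P

/-- Property `#(R,>,A)`: for distinct `α₁, α₂ ∈ A` and `β > 0`,
`s_{α₁}(β) < 0` implies `s_{α₂}(β) > 0`. -/
def PropSharp (P A : Set V) : Prop :=
  ∀ α₁ ∈ A, ∀ α₂ ∈ A, α₁ ≠ α₂ → ∀ β ∈ P, -(sRefl α₁ β) ∈ P → sRefl α₂ β ∈ P

/-- Property `##(R,>,A)`: for disjoint `A₁, A₂ ⊆ A` and `β > 0` with `S_{A₁}(β) < 0`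
one has `S_{A₂}(β) > 0` and `S_{A₁}S_{A₂}(β) < 0`. -/
def PropSharpSharp (P : Set V) (A : Finset V) : Prop :=
  ∀ A₁ ⊆ A, ∀ A₂ ⊆ A, Disjoint A₁ A₂ → ∀ β ∈ P, -(SRefl A₁ β) ∈ P →
    SRefl A₂ β ∈ P ∧ -(SRefl A₁ (SRefl A₂ β)) ∈ P

/-- `R⁺_B = {β : β > 0 ∧ S_B(β) < 0}`. -/
noncomputable def RPlus (P : Set V) (B : Finset V) : Set V :=
  {β | β ∈ P ∧ -(SRefl B β) ∈ P}

/-- The Weyl group of `R`, as the subgroup of linear automorphisms of `V` generated by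
the reflections in the roots. -/
noncomputable def weylGroup (R : Set V) : Subgroup (V ≃ₗ[ℝ] V) :=
  Subgroup.closure {w | ∃ α ∈ R, ∀ v, w v = sRefl α v}

/-- `α` is a simple root relative to the positive system `P`. -/
def IsSimpleRoot (P : Set V) (α : V) : Prop :=
  α ∈ P ∧ ¬∃ β ∈ P, ∃ γ ∈ P, α = β + γ

section Reflection

variable {α : V}

lemma sRefl_of_two_mul_inner_eq {v : V} {c : ℝ} (hα : α ≠ 0)
    (h : 2 * ⟪v, α⟫_ℝ = c * ⟪α, α⟫_ℝ) : sRefl α v = v - c • α := by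
  rw [sRefl, div_eq_of_eq_mul (inner_self_ne_zero.mpr hα) h]

lemma inner_sRefl_left (v : V) : ⟪sRefl α v, α⟫_ℝ = -⟪v, α⟫_ℝ := by
  rcases eq_or_ne α 0 with rfl | hα
  · simp [sRefl]
  · have : ⟪α, α⟫_ℝ ≠ 0 := inner_self_ne_zero.mpr hα
    simp only [sRefl, inner_sub_left, real_inner_smul_left]
    field_simp
    ring

lemma sRefl_neg (v : V) : sRefl α (-v) = -sRefl α v := by
  simp only [sRefl, inner_neg_left, mul_neg, neg_div, neg_smul]
  abel

lemma sRefl_sRefl (v : V) : sRefl α (sRefl α v) = v := by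
  conv_lhs => rw [sRefl, inner_sRefl_left]
  rw [sRefl]
  simp only [mul_neg, neg_div, neg_smul, sub_neg_eq_add]
  abel

lemma sRefl_self (hα : α ≠ 0) : sRefl α α = -α := by
  rw [sRefl_of_two_mul_inner_eq hα (c := 2) rfl, two_smul]
  abel

lemma neg_sRefl_neg_sRefl (v : V) : -sRefl α (-sRefl α v) = v := by
  rw [sRefl_neg, sRefl_sRefl, neg_neg]

lemma neg_sRefl_eq_self_iff (hα : α ≠ 0) {v : V} : -sRefl α v = α ↔ v = α := by
  refine ⟨fun h => ?_, fun h => by rw [h, sRefl_self hα, neg_neg]⟩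
  rw [← sRefl_sRefl (α := α) v, ← neg_neg (sRefl α v), h, sRefl_neg, sRefl_self hα, neg_neg]

lemma inner_sRefl_sRefl (u v : V) : ⟪sRefl α u, sRefl α v⟫_ℝ = ⟪u, v⟫_ℝ := by
  rcases eq_or_ne α 0 with rfl | hα
  · simp [sRefl]
  · have : ⟪α, α⟫_ℝ ≠ 0 := inner_self_ne_zero.mpr hα
    simp only [sRefl, inner_sub_left, inner_sub_right, real_inner_smul_left,
      real_inner_smul_right, real_inner_comm α v]
    field_simp
    ring

lemma LinearEquiv.map_sRefl {f : V ≃ₗ[ℝ] V} (hf : ∀ u v : V, ⟪f u, f v⟫_ℝ = ⟪u, v⟫_ℝ)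
    (v : V) : f (sRefl α v) = sRefl (f α) (f v) := by
  simp only [sRefl, map_sub, map_smul, hf]

end Reflection

def rootSystemAut (R : Set V) : Subgroup (V ≃ₗ[ℝ] V) where
  carrier := {w | (∀ u v : V, ⟪w u, w v⟫_ℝ = ⟪u, v⟫_ℝ) ∧ ∀ v, w v ∈ R ↔ v ∈ R}
  mul_mem' {w w'} hw hw' :=
    ⟨fun u v => (hw.1 _ _).trans (hw'.1 u v), fun v => (hw.2 _).trans (hw'.2 v)⟩
  one_mem' := ⟨fun _ _ => rfl, fun _ => Iff.rfl⟩
  inv_mem' {w} hw := by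
    refine ⟨fun u v => ?_, fun v => ?_⟩
    · rw [← hw.1]
      simp
    · rw [← hw.2]
      simp

lemma weylGroup_le_rootSystemAut {R : Set V} (hR : IsRootSystem R) :
    weylGroup R ≤ rootSystemAut R := by
  refine Subgroup.closure_le _ |>.mpr ?_
  rintro w ⟨α, hα, hw⟩
  refine ⟨fun u v => by rw [hw, hw, inner_sRefl_sRefl], fun v => ⟨fun h => ?_, fun h => ?_⟩⟩
  · have := hR.refl_mem α hα _ h
    rwa [hw, sRefl_sRefl] at this
  · rw [hw]
    exact hR.refl_mem α hα v h

namespace IsRootSystem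

variable {R : Set V} (hR : IsRootSystem R)
include hR

lemma neg_mem {β : V} (hβ : β ∈ R) : -β ∈ R := by
  simpa [sRefl_self (hR.ne_zero β hβ)] using hR.refl_mem β hβ β hβ

lemma exists_two_mul_inner_eq {α β : V} (hα : α ∈ R) (hβ : β ∈ R) :
    ∃ n : ℤ, 2 * ⟪β, α⟫_ℝ = n * ⟪α, α⟫_ℝ := by
  obtain ⟨n, hn⟩ := hR.integral α hα β hβ
  exact ⟨n, (div_eq_iff (inner_self_ne_zero.mpr (hR.ne_zero α hα))).mp hn⟩

lemma add_mem_of_inner_neg {β β' : V} (hβ : β ∈ R) (hβ' : β' ∈ R) (hne : β ≠ -β')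
    (hneg : ⟪β, β'⟫_ℝ < 0) : β + β' ∈ R := by
  have hp : 0 < ⟪β, β⟫_ℝ := real_inner_self_pos.mpr (hR.ne_zero β hβ)
  have hp' : 0 < ⟪β', β'⟫_ℝ := real_inner_self_pos.mpr (hR.ne_zero β' hβ')
  obtain ⟨m, hm⟩ := hR.exists_two_mul_inner_eq hβ' hβ
  obtain ⟨m', hm'⟩ := hR.exists_two_mul_inner_eq hβ hβ'
  rw [real_inner_comm] at hm'
  have hm_neg : m < 0 := by
    by_contra! h
    nlinarith [(by exact_mod_cast h : (0 : ℝ) ≤ m)]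
  have hm'_neg : m' < 0 := by
    by_contra! h
    nlinarith [(by exact_mod_cast h : (0 : ℝ) ≤ m')]
  rcases (by omega : m = -1 ∨ m ≤ -2) with rfl | hm_le
  · have := hR.refl_mem β' hβ' β hβ
    rwa [sRefl_of_two_mul_inner_eq (hR.ne_zero β' hβ') hm, Int.cast_neg, Int.cast_one,
      neg_one_smul, sub_neg_eq_add] at this
  rcases (by omega : m' = -1 ∨ m' ≤ -2) with rfl | hm'_le
  · have := hR.refl_mem β hβ β' hβ'
    rwa [sRefl_of_two_mul_inner_eq (hR.ne_zero β hβ) (by rwa [real_inner_comm]),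
      Int.cast_neg, Int.cast_one, neg_one_smul, sub_neg_eq_add, add_comm] at this
  -- Both Cartan integers are at most `-2`, which forces `‖β + β'‖² ≤ 0`.
  exfalso
  have : ⟪β + β', β + β'⟫_ℝ ≤ 0 := by
    have : (m : ℝ) ≤ -2 := by exact_mod_cast hm_le
    have : (m' : ℝ) ≤ -2 := by exact_mod_cast hm'_le
    rw [real_inner_add_add_self]
    nlinarith
  exact hne (eq_neg_of_add_eq_zero_left (real_inner_self_nonpos.mp this))

end IsRootSystem

namespace IsPositiveSystem

variable {R P : Set V} (hP : IsPositiveSystem R P)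
include hP

lemma add_mem_of_inner_neg (hR : IsRootSystem R) {β γ : V} (hβ : β ∈ P) (hγ : γ ∈ P)
    (h : ⟪β, γ⟫_ℝ < 0) : β + γ ∈ P :=
  hP.add_mem β hβ γ hγ
    (hR.add_mem_of_inner_neg (hP.subset hβ) (hP.subset hγ)
      (by rintro rfl; exact hP.not_both γ hγ hβ) h)

end IsPositiveSystem

namespace IsSimpleRoot

variable {R P : Set V} (hR : IsRootSystem R) (hP : IsPositiveSystem R P) {γ : V}
  (hγ : IsSimpleRoot P γ)
include hR hP hγ

lemma sub_mem_of_inner_pos {β : V} (hβ : β ∈ P) (hne : β ≠ γ) (h : 0 < ⟪β, γ⟫_ℝ) :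
    β - γ ∈ P := by
  have hγR := hP.subset hγ.1
  have hR' : β + -γ ∈ R :=
    hR.add_mem_of_inner_neg (hP.subset hβ) (hR.neg_mem hγR) (by rwa [neg_neg])
      (by rwa [inner_neg_right, neg_lt_zero])
  rw [← sub_eq_add_neg] at hR'
  refine (hP.mem_or_neg_mem _ hR').resolve_right fun hneg => hγ.2 ⟨β, hβ, _, hneg, ?_⟩
  abel

/-- Here `n • γ - δ = -s_γ(δ)`. It pairs with `γ` exactly as `δ` does, so for `|n| ≥ 2` both
can be moved towards `0` by the same `±γ`, lowering `|n|` by `2`; the cases `|n| ≤ 1` contradict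
positivity or simplicity of `γ`. -/
lemma smul_sub_notMem (n : ℤ) {δ : V} (hδ : δ ∈ P) (hne : δ ≠ γ)
    (hn : 2 * ⟪δ, γ⟫_ℝ = n * ⟪γ, γ⟫_ℝ) : (n : ℝ) • γ - δ ∉ P := by
  induction h : n.natAbs using Nat.strong_induction_on generalizing n δ with
  | _ N ih =>
  intro hε
  have hγP := hγ.1
  have hγR := hP.subset hγP
  have hpos : 0 < ⟪γ, γ⟫_ℝ := real_inner_self_pos.mpr (hR.ne_zero γ hγR)
  have hεγ : 2 * ⟪(n : ℝ) • γ - δ, γ⟫_ℝ = n * ⟪γ, γ⟫_ℝ := by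
    rw [inner_sub_left, real_inner_smul_left]
    linarith
  rcases (by omega : n ≤ -2 ∨ n = -1 ∨ n = 0 ∨ n = 1 ∨ 2 ≤ n) with hle | rfl | rfl | rfl | hge
  · have hnR : (n : ℝ) ≤ -2 := by exact_mod_cast hle
    refine ih _ (by omega) (n + 2) (hP.add_mem_of_inner_neg hR hδ hγP (by nlinarith)) ?_ ?_ rfl
      ?_
    · intro h'
      exact hR.ne_zero δ (hP.subset hδ) (by simpa using h')
    · rw [inner_add_left]
      push_cast
      linarith
    · convert hP.add_mem_of_inner_neg hR hε hγP (by nlinarith) using 1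
      push_cast
      module
  · have hsum : δ + (((-1 : ℤ) : ℝ) • γ - δ) = -γ := by
      push_cast
      module
    have := hP.add_mem δ hδ _ hε (hsum ▸ hR.neg_mem hγR)
    exact hP.not_both γ hγP (hsum ▸ this)
  · exact hP.not_both δ hδ (by simpa using hε)
  · exact hγ.2 ⟨δ, hδ, _, hε, by simp⟩
  · have hnR : (2 : ℝ) ≤ n := by exact_mod_cast hge
    have hεne : (n : ℝ) • γ - δ ≠ γ := by
      intro h'
      have hδeq : δ = ((n : ℝ) - 1) • γ := by
        linear_combination (norm := module) -h'
      rcases hR.reduced γ hγR _ (hδeq ▸ hP.subset hδ) with h1 | h1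
      · exact hne (by rw [hδeq, h1, one_smul])
      · linarith
    have hδ' : δ - γ ≠ γ := by
      intro h'
      have hδeq : δ = (2 : ℝ) • γ := by
        linear_combination (norm := module) h'
      rcases hR.reduced γ hγR 2 (hδeq ▸ hP.subset hδ) with h1 | h1 <;> norm_num at h1
    refine ih _ (by omega) (n - 2) (sub_mem_of_inner_pos hR hP hγ hδ hne (by nlinarith)) hδ'
      ?_ rfl ?_
    · rw [inner_sub_left]
      push_cast
      linarith
    · convert sub_mem_of_inner_pos hR hP hγ hε hεne (by nlinarith) using 1
      push_cast
      module

lemma sRefl_mem {δ : V} (hδ : δ ∈ P) (hne : δ ≠ γ) : sRefl γ δ ∈ P := by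
  obtain ⟨n, hn⟩ := hR.exists_two_mul_inner_eq (hP.subset hγ.1) (hP.subset hδ)
  have hs : sRefl γ δ = δ - (n : ℝ) • γ :=
    sRefl_of_two_mul_inner_eq (hR.ne_zero γ (hP.subset hγ.1)) hn
  refine (hP.mem_or_neg_mem _ (hR.refl_mem γ (hP.subset hγ.1) δ (hP.subset hδ))).resolve_right
    fun hneg => smul_sub_notMem hR hP hγ n hδ hne hn ?_
  rwa [hs, neg_sub] at hneg

end IsSimpleRoot

/-- Decomposition of `R⁺_α \ {α}` into the two subsets according to the sign of `μ⁻¹β`,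
interchanged by the involution `β ↦ -s_α(β)`. -/
theorem statement10 (R P : Set V) (hR : IsRootSystem R) (hP : IsPositiveSystem R P)
    (α : V) (hα : α ∈ P) (μ : V ≃ₗ[ℝ] V) (hμ : μ ∈ weylGroup R)
    (hsimple : IsSimpleRoot P (μ.symm α)) :
    Disjoint {β | β ∈ P ∧ -(sRefl α β) ∈ P ∧ -(μ.symm β) ∈ P}
      {β | β ∈ P ∧ -(sRefl α β) ∈ P ∧ μ.symm β ∈ P ∧ β ≠ α} ∧
    {β | β ∈ P ∧ -(sRefl α β) ∈ P ∧ -(μ.symm β) ∈ P} ∪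
      {β | β ∈ P ∧ -(sRefl α β) ∈ P ∧ μ.symm β ∈ P ∧ β ≠ α} =
      {β | β ∈ P ∧ -(sRefl α β) ∈ P} \ {α} ∧
    (∀ β ∈ {β | β ∈ P ∧ -(sRefl α β) ∈ P} \ {α},
      -(sRefl α β) ∈ {β | β ∈ P ∧ -(sRefl α β) ∈ P} \ {α} ∧ -(sRefl α (-(sRefl α β))) = β) ∧
    (∀ β ∈ {β | β ∈ P ∧ -(sRefl α β) ∈ P ∧ -(μ.symm β) ∈ P},
      -(sRefl α β) ∈ {β | β ∈ P ∧ -(sRefl α β) ∈ P ∧ μ.symm β ∈ P ∧ β ≠ α}) ∧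
    (∀ β ∈ {β | β ∈ P ∧ -(sRefl α β) ∈ P ∧ μ.symm β ∈ P ∧ β ≠ α},
      -(sRefl α β) ∈ {β | β ∈ P ∧ -(sRefl α β) ∈ P ∧ -(μ.symm β) ∈ P}) := by
  have hα0 : α ≠ 0 := hR.ne_zero α (hP.subset hα)
  obtain ⟨hiso, hroot⟩ := weylGroup_le_rootSystemAut hR (inv_mem hμ)
  have hconj (v : V) : μ.symm (sRefl α v) = sRefl (μ.symm α) (μ.symm v) :=
    LinearEquiv.map_sRefl hiso v
  have hne_of_neg {β : V} (h : -μ.symm β ∈ P) : β ≠ α := by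
    rintro rfl
    exact hP.not_both _ hsimple.1 h
  refine ⟨Set.disjoint_left.mpr fun β h h' => hP.not_both _ h'.2.2.1 h.2.2, ?_, ?_, ?_, ?_⟩
  · ext β
    simp only [Set.mem_union, Set.mem_ofPred_eq, Set.mem_sdiff, Set.mem_singleton_iff]
    refine ⟨fun h => h.elim (fun h => ⟨⟨h.1, h.2.1⟩, hne_of_neg h.2.2⟩)
      (fun h => ⟨⟨h.1, h.2.1⟩, h.2.2.2⟩), fun ⟨⟨h1, h2⟩, h3⟩ => ?_⟩
    rcases hP.mem_or_neg_mem _ ((hroot _).mpr (hP.subset h1)) with h | h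
    · exact Or.inr ⟨h1, h2, h, h3⟩
    · exact Or.inl ⟨h1, h2, h⟩
  · rintro β ⟨⟨h1, h2⟩, h3⟩
    exact ⟨⟨⟨h2, by rwa [neg_sRefl_neg_sRefl]⟩, (neg_sRefl_eq_self_iff hα0).not.mpr h3⟩,
      neg_sRefl_neg_sRefl β⟩
  · rintro β ⟨h1, h2, h3⟩
    refine ⟨h2, by rwa [neg_sRefl_neg_sRefl], ?_,
      (neg_sRefl_eq_self_iff hα0).not.mpr (hne_of_neg h3)⟩
    rw [map_neg, hconj, ← sRefl_neg]
    refine hsimple.sRefl_mem hR hP h3 fun h => hP.not_both β h1 ?_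
    rw [neg_eq_iff_eq_neg, ← map_neg, μ.symm.injective.eq_iff] at h
    rwa [h, neg_neg]
  · rintro β ⟨h1, h2, h3, h4⟩
    refine ⟨h2, by rwa [neg_sRefl_neg_sRefl], ?_⟩
    rw [map_neg, neg_neg, hconj]
    exact hsimple.sRefl_mem hR hP h3 (μ.symm.injective.ne h4)
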